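/- A real polynomial f of degree m with gcd(f, f') = 1 has all roots real if and only if V(−∞) − V(∞) = m, where V(±∞) denotes the number of sign variations of the Sturm sequence of f evaluated at ±∞ (i.e., using the signs of leading coefficients, adjusted by parity of degree at −∞). -/

import Mathlib

open Polynomial

/-- The Sturm sequence of a real polynomial: `f₀ = f`, `f₁ = f'`,
`f_{i+2} = -(f_i mod f_{i+1})`. -/
noncomputable def sturmSeq (f : Polynomial ℝ) : ℕ → Polynomial ℝ
  | 0 => f
  | 1 => derivative f
  | (n + 2) => -(sturmSeq f n % sturmSeq f (n + 1))

/-- The number of sign changes (ignoring zeros) in a finite list of reals. -/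
noncomputable def signChanges (l : List ℝ) : ℕ :=
  let l' := l.filter fun x : ℝ => decide (x ≠ 0)
  ((l'.zip l'.tail).filter fun q => decide (q.1 * q.2 < 0)).length

/-- `V(+∞)`: sign variations of the Sturm sequence at `+∞`, using leading coefficients. -/
noncomputable def sturmVarTop (f : Polynomial ℝ) : ℕ :=
  signChanges ((List.range (f.natDegree + 1)).map fun i => (sturmSeq f i).leadingCoeff)

/-- `V(-∞)`: sign variations of the Sturm sequence at `-∞`, using leading coefficients
adjusted by the parity of the degree. -/
noncomputable def sturmVarBot (f : Polynomial ℝ) : ℕ :=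
  signChanges ((List.range (f.natDegree + 1)).map fun i =>
    (-1 : ℝ) ^ (sturmSeq f i).natDegree * (sturmSeq f i).leadingCoeff)


open List Filter

/-! ### Interlacing lists -/

inductive Il : List ℝ → List ℝ → Prop
  | single (a : ℝ) : Il [a] []
  | cons {a b c : ℝ} {L l : List ℝ} : a < c → c < b → Il (b :: L) l → Il (a :: b :: L) (c :: l)

theorem Il.length {L l : List ℝ} (h : Il L l) : L.length = l.length + 1 := by
  induction h with
  | single a => rfl
  | cons h1 h2 h3 ih => simpa using ih

theorem Il.sorted_big {L l : List ℝ} (h : Il L l) : L.Pairwise (· < ·) := by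
  induction h with
  | single a => simp
  | cons h1 h2 h3 ih =>
    rcases List.pairwise_cons.1 ih with ⟨hb, hs⟩
    refine List.pairwise_cons.2 ⟨?_, ih⟩
    intro x hx
    rcases List.mem_cons.1 hx with rfl | hx
    · exact h1.trans h2
    · exact (h1.trans h2).trans (hb x hx)

theorem Il.small_gt_head {b : ℝ} {L l : List ℝ} (h : Il (b :: L) l) :
    ∀ x ∈ l, b < x := by
  induction l generalizing b L with
  | nil => simp
  | cons c l' ih =>
    cases h with
    | cons h1 h2 h3 =>
      intro x hx
      rcases List.mem_cons.1 hx with rfl | hx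
      · exact h1
      · exact h1.trans (h2.trans (ih h3 x hx))

theorem Il.sorted_small {L l : List ℝ} (h : Il L l) : l.Pairwise (· < ·) := by
  induction h with
  | single a => simp
  | cons h1 h2 h3 ih =>
    refine List.pairwise_cons.2 ⟨?_, ih⟩
    intro x hx
    exact h2.trans (h3.small_gt_head x hx)

theorem Il.filter_big {L l : List ℝ} (h : Il L l) :
    ∀ pre post (c : ℝ), l = pre ++ c :: post →
      c ∉ L ∧ ((L.filter fun a => decide (c < a)).length = post.length + 1) := by
  induction h with
  | single a => intro pre post c hc; simp at hc
  | cons h1 h2 h3 ih =>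
    rename_i a b c0 L' l'
    intro pre post c hc
    cases pre with
    | nil =>
      simp only [List.nil_append, List.cons.injEq] at hc
      obtain ⟨h4, h5⟩ := hc
      rw [← h4, ← h5]
      have hgt : ∀ x ∈ b :: L', c0 < x := by
        intro x hx
        rcases List.mem_cons.1 hx with rfl | hx
        · exact h2
        · exact h2.trans ((List.pairwise_cons.1 h3.sorted_big).1 x hx)
      constructor
      · intro hmem
        rcases List.mem_cons.1 hmem with h | hmem
        · exact absurd (h ▸ h1) (lt_irrefl _)
        · exact absurd (hgt c0 hmem) (lt_irrefl _)
      · have heq : (b :: L').filter (fun a => decide (c0 < a)) = b :: L' :=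
          List.filter_eq_self.2 fun x hx => by simpa using hgt x hx
        rw [List.filter_cons_of_neg (by simpa using not_lt.2 h1.le), heq]
        have := h3.length
        simp at this ⊢
        omega
    | cons p pre' =>
      simp only [List.cons_append, List.cons.injEq] at hc
      obtain ⟨h4, h5⟩ := hc
      obtain ⟨hnot, hlen⟩ := ih pre' post c h5
      have hbc : b < c := h3.small_gt_head c (h5 ▸ (by simp : c ∈ pre' ++ c :: post))
      have hac : a < c := (h1.trans h2).trans hbc
      constructor
      · intro hmem
        rcases List.mem_cons.1 hmem with h | hmem
        · exact absurd (h ▸ hac) (lt_irrefl _)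
        · exact hnot hmem
      · rw [List.filter_cons_of_neg (by simpa using not_lt.2 hac.le)]
        exact hlen


theorem Il.filter_small {L l : List ℝ} (h : Il L l) :
    ∀ pre post (c : ℝ), L = pre ++ c :: post →
      c ∉ l ∧ ((l.filter fun a => decide (c < a)).length = post.length) := by
  induction h with
  | single a =>
    intro pre post c hc
    cases pre with
    | nil =>
      simp only [List.nil_append, List.cons.injEq] at hc
      obtain ⟨h4, h5⟩ := hc
      simp [← h5]
    | cons p pre' =>
      simp only [List.cons_append, List.cons.injEq] at hc
      exact absurd hc.2.symm (by simp)
  | cons h1 h2 h3 ih =>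
    rename_i a b c0 L' l'
    intro pre post c hc
    cases pre with
    | nil =>
      simp only [List.nil_append, List.cons.injEq] at hc
      obtain ⟨h4, h5⟩ := hc
      rw [← h4, ← h5]
      have hgt : ∀ x ∈ c0 :: l', a < x := by
        intro x hx
        rcases List.mem_cons.1 hx with rfl | hx
        · exact h1
        · exact h1.trans (h2.trans (h3.small_gt_head x hx))
      constructor
      · intro hmem; exact absurd (hgt a hmem) (lt_irrefl _)
      · have heq : (c0 :: l').filter (fun x => decide (a < x)) = c0 :: l' :=
          List.filter_eq_self.2 fun x hx => by simpa using hgt x hx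
        rw [heq]
        have := h3.length
        simp at this ⊢
        omega
    | cons p pre' =>
      simp only [List.cons_append, List.cons.injEq] at hc
      obtain ⟨h4, h5⟩ := hc
      obtain ⟨hnot, hlen⟩ := ih pre' post c h5
      have hbc : b ≤ c := by
        have hmem : c ∈ b :: L' := h5 ▸ (by simp : c ∈ pre' ++ c :: post)
        rcases List.mem_cons.1 hmem with rfl | hmem
        · exact le_refl _
        · exact ((List.pairwise_cons.1 h3.sorted_big).1 c hmem).le
      have hc0c : c0 < c := h2.trans_le hbc
      constructor
      · intro hmem
        rcases List.mem_cons.1 hmem with h | hmem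
        · exact absurd (h ▸ hc0c) (lt_irrefl _)
        · exact hnot hmem
      · rw [List.filter_cons_of_neg (by simpa using not_lt.2 hc0c.le)]
        exact hlen

theorem Il.small_lt_getLast {L l : List ℝ} (h : Il L l) (hL : L ≠ []) :
    ∀ x ∈ l, x < L.getLast hL := by
  induction h with
  | single a => simp
  | cons h1 h2 h3 ih =>
    rename_i a b c0 L' l'
    intro x hx
    rw [List.getLast_cons (by simp)]
    rcases List.mem_cons.1 hx with rfl | hx
    · rcases List.mem_cons.1 (List.getLast_mem (l := b :: L') (by simp)) with h | hmem
      · exact lt_of_lt_of_le h2 (le_of_eq h.symm)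
      · exact h2.trans ((List.pairwise_cons.1 h3.sorted_big).1 _ hmem)
    · exact ih (by simp) x hx

theorem Il.ext {l mid : List ℝ} (h : Il l mid) {u v : ℝ}
    (hu : ∀ x ∈ l, u < x) (hv : ∀ x ∈ l, x < v) :
    Il (u :: (mid ++ [v])) l := by
  induction h generalizing u with
  | single a =>
    exact Il.cons (hu a (by simp)) (hv a (by simp)) (Il.single v)
  | cons h1 h2 h3 ih =>
    rename_i a b c0 L' l'
    refine Il.cons (hu a (by simp)) h1 ?_
    refine ih ?_ ?_
    · intro x hx
      rcases List.mem_cons.1 hx with rfl | hx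
      · exact h2
      · exact h2.trans ((List.pairwise_cons.1 h3.sorted_big).1 x hx)
    · intro x hx; exact hv x (by simp [hx])

/-- `p` is real-rooted with (simple) sorted root list `l`. -/
def RR (p : Polynomial ℝ) (l : List ℝ) : Prop :=
  l.Pairwise (· < ·) ∧ p ≠ 0 ∧ l.length = p.natDegree ∧
    p = C p.leadingCoeff * (l.map fun a => X - C a).prod

theorem RR.eval_eq {p : Polynomial ℝ} {l : List ℝ} (h : RR p l) (x : ℝ) :
    p.eval x = p.leadingCoeff * (l.map fun a => x - a).prod := by
  conv_lhs => rw [h.2.2.2]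
  simp [eval_list_prod, List.map_map, Function.comp_def]

theorem prod_sign (c : ℝ) : ∀ (l : List ℝ), c ∉ l →
    0 < (-1 : ℝ) ^ ((l.filter fun a => decide (c < a)).length) * (l.map fun a => c - a).prod := by
  intro l
  induction l with
  | nil => simp
  | cons a t ih =>
    intro hc
    have hca : c ≠ a := fun h => hc (by simp [h])
    have ht : c ∉ t := fun h => hc (by simp [h])
    have IH := ih ht
    rcases lt_or_gt_of_ne hca with hlt | hgt
    · rw [List.filter_cons_of_pos (by simpa using hlt)]
      simp only [List.map_cons, List.prod_cons, pow_succ, List.length_cons]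
      nlinarith [IH]
    · rw [List.filter_cons_of_neg (by simpa using not_lt.2 hgt.le)]
      simp only [List.map_cons, List.prod_cons]
      nlinarith [IH]

theorem RR.eval_sign {p : Polynomial ℝ} {l : List ℝ} (h : RR p l) (hlc : 0 < p.leadingCoeff)
    {c : ℝ} (hc : c ∉ l) :
    0 < (-1 : ℝ) ^ ((l.filter fun a => decide (c < a)).length) * p.eval c := by
  rw [h.eval_eq c]
  have := prod_sign c l hc
  nlinarith [this]

theorem RR.eval_root {p : Polynomial ℝ} {l : List ℝ} (h : RR p l) {c : ℝ} (hc : c ∈ l) :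
    p.eval c = 0 := by
  rw [h.eval_eq c]
  have : (0:ℝ) ∈ l.map fun a => c - a := List.mem_map.2 ⟨c, hc, by ring⟩
  rw [List.prod_eq_zero this, mul_zero]

/-- The workhorse: a list of distinct roots of cardinality `≥ natDegree` gives `RR`. -/
theorem RR_mk {p : Polynomial ℝ} {l : List ℝ} (hp : p ≠ 0) (hs : l.Pairwise (· < ·))
    (hroots : ∀ x ∈ l, p.eval x = 0) (hdeg : p.natDegree ≤ l.length) : RR p l := by
  have hnd : l.Nodup := hs.nodup
  have hle : (l : Multiset ℝ) ≤ p.roots := by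
    rw [Multiset.le_iff_count]
    intro a
    by_cases ha : a ∈ l
    · have h1 : Multiset.count a (l : Multiset ℝ) = 1 := by
        rw [Multiset.coe_count, List.count_eq_one_of_mem hnd ha]
      rw [h1, count_roots]
      exact (rootMultiplicity_pos hp).2 (hroots a ha)
    · rw [Multiset.coe_count, List.count_eq_zero_of_not_mem ha]
      exact Nat.zero_le _
  have hcard : Multiset.card p.roots ≤ l.length := by
    calc Multiset.card p.roots ≤ p.natDegree := p.card_roots'
    _ ≤ l.length := hdeg
  have heq : p.roots = (l : Multiset ℝ) := by
    refine (Multiset.eq_of_le_of_card_le hle ?_).symm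
    simpa using hcard
  have hlen : Multiset.card p.roots = l.length := by rw [heq]; simp
  have hcr := p.card_roots'
  have hcard2 : Multiset.card p.roots = p.natDegree := by omega
  have := C_leadingCoeff_mul_prod_multiset_X_sub_C hcard2
  refine ⟨hs, hp, by omega, ?_⟩
  rw [heq, Multiset.map_coe, Multiset.prod_coe] at this
  exact this.symm

def SignAt (g : Polynomial ℝ) (s : ℝ) (l : List ℝ) : Prop :=
  ∀ pre post (c : ℝ), l = pre ++ c :: post → 0 < s * (-1) ^ post.length * g.eval c

theorem SignAt.tail {g : Polynomial ℝ} {s x : ℝ} {l : List ℝ} (h : SignAt g s (x :: l)) :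
    SignAt g s l := fun pre post c hc => h (x :: pre) post c (by simp [hc])

theorem SignAt.alt {g : Polynomial ℝ} {s : ℝ} (hs : s * s = 1) :
    ∀ {l : List ℝ}, SignAt g s l → l.IsChain (fun a b => g.eval a * g.eval b < 0) := by
  intro l
  induction l with
  | nil => intro _; simp
  | cons a t ih =>
    intro h
    cases t with
    | nil => simp
    | cons b t' =>
      rw [List.isChain_cons_cons]
      refine ⟨?_, ih h.tail⟩
      have h1 := h [] (b :: t') a rfl
      have h2 := h [a] t' b rfl
      simp only [List.length_cons] at h1 h2
      rw [pow_succ] at h1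
      have hA : ((-1:ℝ) ^ t'.length) * ((-1:ℝ) ^ t'.length) = 1 := by
        rw [← pow_add]; exact Even.neg_one_pow ⟨t'.length, by ring⟩
      have hprod := mul_pos h1 h2
      have hre : (s * ((-1:ℝ) ^ t'.length * -1) * eval a g) * (s * (-1:ℝ) ^ t'.length * eval b g)
          = -((s * s) * (((-1:ℝ) ^ t'.length) * ((-1:ℝ) ^ t'.length)) * (eval a g * eval b g)) := by
        ring
      rw [hre, hs, hA] at hprod
      linarith

theorem poly_ivt {p : Polynomial ℝ} {a b : ℝ} (hab : a < b) (h : p.eval a * p.eval b < 0) :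
    ∃ c, a < c ∧ c < b ∧ p.eval c = 0 := by
  have hc : ContinuousOn (fun x => p.eval x) (Set.Icc a b) := (Polynomial.continuous p).continuousOn
  rcases mul_neg_iff.1 h with ⟨ha, hb⟩ | ⟨ha, hb⟩
  · have := intermediate_value_Ioo' hab.le hc (by constructor <;> assumption : (0:ℝ) ∈ Set.Ioo (p.eval b) (p.eval a))
    obtain ⟨c, hcmem, hc0⟩ := this
    exact ⟨c, hcmem.1, hcmem.2, hc0⟩
  · have := intermediate_value_Ioo hab.le hc (by constructor <;> assumption : (0:ℝ) ∈ Set.Ioo (p.eval a) (p.eval b))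
    obtain ⟨c, hcmem, hc0⟩ := this
    exact ⟨c, hcmem.1, hcmem.2, hc0⟩

theorem roots_between {g : Polynomial ℝ} :
    ∀ {l : List ℝ}, l.Pairwise (· < ·) → l ≠ [] →
      l.IsChain (fun a b => g.eval a * g.eval b < 0) →
      ∃ mid, Il l mid ∧ ∀ x ∈ mid, g.eval x = 0 := by
  intro l
  induction l with
  | nil => intro _ h; exact absurd rfl h
  | cons a t ih =>
    intro hs _ hch
    cases t with
    | nil => exact ⟨[], Il.single a, by simp⟩
    | cons b t' =>
      rw [List.isChain_cons_cons] at hch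
      obtain ⟨hab, hch'⟩ := hch
      have hab' : a < b := (List.pairwise_cons.1 hs).1 b (by simp)
      obtain ⟨ρ, hρ1, hρ2, hρ0⟩ := poly_ivt hab' hab
      obtain ⟨mid, hmid, hroots⟩ := ih (List.pairwise_cons.1 hs).2 (by simp) hch'
      refine ⟨ρ :: mid, Il.cons hρ1 hρ2 hmid, ?_⟩
      intro x hx
      rcases List.mem_cons.1 hx with rfl | hx
      · exact hρ0
      · exact hroots x hx

theorem exists_gt_pos (p : Polynomial ℝ) (hdeg : 0 < p.natDegree) (x₀ : ℝ) :
    ∃ M, x₀ < M ∧ 0 < p.eval M * p.leadingCoeff := by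
  have hp : p ≠ 0 := fun h => by simp [h] at hdeg
  have hdeg' : 0 < p.degree := natDegree_pos_iff_degree_pos.1 hdeg
  rcases lt_or_gt_of_ne (leadingCoeff_ne_zero.2 hp) with hlc | hlc
  · have hlc' : (0:ℝ) ≤ (-p).leadingCoeff := by rw [leadingCoeff_neg]; linarith
    have ht := tendsto_atTop_of_leadingCoeff_nonneg (-p) (by rwa [degree_neg]) hlc'
    have := ((ht.eventually_gt_atTop 0).and (eventually_gt_atTop x₀)).exists
    obtain ⟨M, h1, h2⟩ := this
    refine ⟨M, h2, ?_⟩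
    simp only [eval_neg] at h1
    nlinarith
  · have ht := tendsto_atTop_of_leadingCoeff_nonneg p hdeg' hlc.le
    have := ((ht.eventually_gt_atTop 0).and (eventually_gt_atTop x₀)).exists
    obtain ⟨M, h1, h2⟩ := this
    exact ⟨M, h2, by nlinarith⟩

theorem exists_lt_sign (p : Polynomial ℝ) (hdeg : 0 < p.natDegree) (x₀ : ℝ) :
    ∃ M, M < x₀ ∧ 0 < p.eval M * p.leadingCoeff * (-1) ^ p.natDegree := by
  set q : Polynomial ℝ := p.comp (-X) with hq
  have hdq : q.natDegree = p.natDegree := by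
    rw [hq, natDegree_comp]; simp
  have hlcq : q.leadingCoeff = p.leadingCoeff * (-1) ^ p.natDegree := by
    rw [hq, leadingCoeff_comp (by simp)]
    simp
  obtain ⟨M, hM1, hM2⟩ := exists_gt_pos q (by omega) (-x₀)
  refine ⟨-M, by linarith, ?_⟩
  have hev : q.eval M = p.eval (-M) := by rw [hq, eval_comp]; simp
  rw [hev, hlcq] at hM2
  nlinarith

theorem sorted_le_getLast : ∀ {l : List ℝ} (h : l.Pairwise (· < ·)) (hne : l ≠ []),
    ∀ x ∈ l, x ≤ l.getLast hne := by
  intro l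
  induction l with
  | nil => simp
  | cons a t ih =>
    intro hs _ x hx
    cases t with
    | nil => simp at hx; simp [hx]
    | cons b t' =>
      rw [List.getLast_cons (by simp)]
      rcases List.mem_cons.1 hx with rfl | hx
      · have hlt := (List.pairwise_cons.1 hs).1
        have hmem := List.getLast_mem (l := b :: t') (by simp)
        exact (hlt _ hmem).le
      · exact ih (List.pairwise_cons.1 hs).2 (by simp) x hx

def Pair (p q : Polynomial ℝ) : Prop :=
  ∃ L l, RR p L ∧ RR q l ∧ Il L l ∧ 0 < p.leadingCoeff ∧ 0 < q.leadingCoeff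

theorem degree_mod_lt' {p q : Polynomial ℝ} (hq : q ≠ 0) : (p % q).degree < q.degree := by
  rw [Polynomial.mod_def]
  exact lt_of_lt_of_le (degree_modByMonic_lt p (monic_mul_leadingCoeff_inv hq))
    (degree_mul_leadingCoeff_inv q hq).le

theorem stepA {p q : Polynomial ℝ} (h : Pair p q) (hq : q.natDegree ≠ 0) :
    Pair q (-(p % q)) := by
  obtain ⟨L, l, hp, hq', hil, hlcp, hlcq⟩ := h
  set g := -(p % q) with hg
  have hlen := hq'.2.2.1
  have hlne : l ≠ [] := by
    intro h; rw [h] at hlen; simp at hlen; omega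
  have hq0 : q ≠ 0 := hq'.2.1
  have hev : ∀ c ∈ l, g.eval c = -(p.eval c) := by
    intro c hc
    have hdm := EuclideanDomain.div_add_mod p q
    have h1 : p.eval c = q.eval c * (p / q).eval c + (p % q).eval c := by
      conv_lhs => rw [← hdm]
      simp
    rw [hq'.eval_root hc, zero_mul, zero_add] at h1
    rw [hg, eval_neg, ← h1]
  have hsign : SignAt g 1 l := by
    intro pre post c hc
    have hmem : c ∈ l := hc ▸ (by simp)
    obtain ⟨hcl, hflt⟩ := hil.filter_big pre post c hc
    have hsgn := hp.eval_sign hlcp hcl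
    rw [hflt, pow_succ] at hsgn
    rw [hev c hmem]
    nlinarith [hsgn]
  have hg0 : g ≠ 0 := by
    obtain ⟨c0, t, hl0⟩ := List.exists_cons_of_ne_nil hlne
    have := hsign [] t c0 hl0
    intro hgz
    rw [hgz] at this; simp at this
  have hdeg : g.degree < q.degree := by rw [hg, degree_neg]; exact degree_mod_lt' hq0
  have hndeg : g.natDegree < q.natDegree := natDegree_lt_natDegree hg0 hdeg
  have hch := SignAt.alt (by norm_num : (1:ℝ) * 1 = 1) hsign
  obtain ⟨mid, hmid, hroots⟩ := roots_between hq'.1 hlne hch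
  have hmlen := hmid.length
  have hRRg : RR g mid := RR_mk hg0 hmid.sorted_small hroots (by omega)
  have hlastpos : 0 < g.eval (l.getLast hlne) := by
    have := hsign l.dropLast [] (l.getLast hlne) (List.dropLast_append_getLast hlne).symm
    simpa using this
  have hlcg : 0 < g.leadingCoeff := by
    have hprodpos : 0 < (mid.map fun a => (l.getLast hlne) - a).prod := by
      apply List.prod_pos
      intro x hx
      obtain ⟨a, ha, rfl⟩ := List.mem_map.1 hx
      have := hmid.small_lt_getLast hlne a ha
      linarith
    have heq := hRRg.eval_eq (l.getLast hlne)
    rw [heq] at hlastpos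
    rcases mul_pos_iff.1 hlastpos with ⟨h1, _⟩ | ⟨_, h2⟩
    · exact h1
    · linarith
  exact ⟨l, mid, hq', hRRg, hmid, hlcq, hlcg⟩

theorem stepB {p q r : Polynomial ℝ} (hpair : Pair q r) (hmod : p % q = -r)
    (hdeg : p.natDegree = q.natDegree + 1) (hlcp : 0 < p.leadingCoeff)
    (hq1 : 0 < q.natDegree) : Pair p q := by
  obtain ⟨l, lr, hq', hr', hil, hlcq, hlcr⟩ := hpair
  have hlen := hq'.2.2.1
  have hlne : l ≠ [] := by intro h; rw [h] at hlen; simp at hlen; omega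
  obtain ⟨c0, t, hl0⟩ := List.exists_cons_of_ne_nil hlne
  have hev : ∀ c ∈ l, p.eval c = -(r.eval c) := by
    intro c hc
    have hdm := EuclideanDomain.div_add_mod p q
    have h1 : p.eval c = q.eval c * (p / q).eval c + (p % q).eval c := by
      conv_lhs => rw [← hdm]; simp
    rw [hq'.eval_root hc, zero_mul, zero_add, hmod, eval_neg] at h1
    exact h1
  have hsign : SignAt p (-1) l := by
    intro pre post c hc
    have hmem : c ∈ l := hc ▸ (by simp)
    obtain ⟨hcl, hflt⟩ := hil.filter_small pre post c hc
    have hsgn := hr'.eval_sign hlcr hcl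
    rw [hflt] at hsgn
    rw [hev c hmem]
    nlinarith [hsgn]
  have hp0 : p ≠ 0 := by
    have := hsign [] t c0 hl0
    intro hpz; rw [hpz] at this; simp at this
  have hch := SignAt.alt (by norm_num : (-1:ℝ) * -1 = 1) hsign
  obtain ⟨mid, hmid, hroots⟩ := roots_between hq'.1 hlne hch
  have hmlen := hmid.length
  -- top root
  have hlast : p.eval (l.getLast hlne) < 0 := by
    have := hsign l.dropLast [] (l.getLast hlne) (List.dropLast_append_getLast hlne).symm
    simp at this; linarith
  obtain ⟨Mt, hMt1, hMt2⟩ := exists_gt_pos p (by omega) (l.getLast hlne)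
  have hevMt : 0 < p.eval Mt := by nlinarith
  obtain ⟨ρt, hρt1, hρt2, hρt0⟩ := poly_ivt hMt1 (by nlinarith)
  -- bottom root
  obtain ⟨Mb, hMb1, hMb2⟩ := exists_lt_sign p (by omega) c0
  have hhead := hsign [] t c0 hl0
  have htlen : t.length + 2 = p.natDegree := by
    have : l.length = t.length + 1 := by rw [hl0]; simp
    omega
  have hA : ((-1:ℝ) ^ t.length) * ((-1:ℝ) ^ t.length) = 1 := by
    rw [← pow_add]; exact Even.neg_one_pow ⟨t.length, by ring⟩
  have hMbneg : p.eval Mb * p.eval c0 < 0 := by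
    rw [← htlen] at hMb2
    have hre : p.eval Mb * p.leadingCoeff * (-1:ℝ) ^ (t.length + 2)
        = (p.eval Mb * p.leadingCoeff) * ((-1:ℝ) ^ t.length) := by
      rw [pow_add]; ring
    rw [hre] at hMb2
    have hprod := mul_pos hMb2 hhead
    have hre2 : (p.eval Mb * p.leadingCoeff * (-1:ℝ) ^ t.length) * (-1 * (-1:ℝ) ^ t.length * p.eval c0)
        = -(p.leadingCoeff * (((-1:ℝ) ^ t.length) * ((-1:ℝ) ^ t.length)) * (p.eval Mb * p.eval c0)) := by
      ring
    rw [hre2, hA] at hprod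
    nlinarith
  obtain ⟨ρb, hρb1, hρb2, hρb0⟩ := poly_ivt hMb1 hMbneg
  -- assemble
  have hheadmem : c0 ∈ l := by rw [hl0]; simp
  have hu : ∀ x ∈ l, ρb < x := by
    intro x hx
    rw [hl0] at hx
    rcases List.mem_cons.1 hx with rfl | hx
    · exact hρb2
    · have hsl : l.Pairwise (· < ·) := hq'.1
      rw [hl0] at hsl
      exact hρb2.trans ((List.pairwise_cons.1 hsl).1 x hx)
  have hv : ∀ x ∈ l, x < ρt := by
    intro x hx
    exact lt_of_le_of_lt (sorted_le_getLast hq'.1 hlne x hx) hρt1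
  have hIl : Il (ρb :: (mid ++ [ρt])) l := hmid.ext hu hv
  have hRRp : RR p (ρb :: (mid ++ [ρt])) := by
    apply RR_mk hp0 hIl.sorted_big
    · intro x hx
      rcases List.mem_cons.1 hx with rfl | hx
      · exact hρb0
      · rcases List.mem_append.1 hx with hx | hx
        · exact hroots x hx
        · rw [List.mem_singleton.1 hx]; exact hρt0
    · simp only [List.length_cons, List.length_append, List.length_singleton]
      omega
  exact ⟨_, l, hRRp, hq', hIl, hlcp, hlcq⟩

def ChainCond (f : Polynomial ℝ) (m : ℕ) : Prop :=
  ∀ i ≤ m, sturmSeq f i ≠ 0 ∧ (sturmSeq f i).natDegree = m - i ∧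
    0 < (sturmSeq f i).leadingCoeff * f.leadingCoeff

theorem Pair.deg {p q : Polynomial ℝ} (h : Pair p q) : p.natDegree = q.natDegree + 1 := by
  obtain ⟨L, l, hp, hq, hil, _, _⟩ := h
  have h1 := hp.2.2.1
  have h2 := hq.2.2.1
  have h3 := hil.length
  omega

theorem RR.card_roots {p : Polynomial ℝ} {l : List ℝ} (h : RR p l) :
    Multiset.card p.roots = p.natDegree := by
  have hle : (l : Multiset ℝ) ≤ p.roots := by
    rw [Multiset.le_iff_count]
    intro a
    by_cases ha : a ∈ l
    · have h1 : Multiset.count a (l : Multiset ℝ) = 1 := by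
        rw [Multiset.coe_count, List.count_eq_one_of_mem h.1.nodup ha]
      rw [h1, count_roots]
      exact (rootMultiplicity_pos h.2.1).2 (h.eval_root ha)
    · rw [Multiset.coe_count, List.count_eq_zero_of_not_mem ha]
      exact Nat.zero_le _
  have h1 : l.length ≤ Multiset.card p.roots := by
    simpa using Multiset.card_le_card hle
  have h2 := p.card_roots'
  have h3 := h.2.2.1
  omega

theorem derivative_facts {f : Polynomial ℝ} (h0 : 0 < f.natDegree) :
    (derivative f).natDegree = f.natDegree - 1 ∧
      (derivative f).leadingCoeff = f.natDegree * f.leadingCoeff ∧ derivative f ≠ 0 := by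
  have hf : f ≠ 0 := fun h => by simp [h] at h0
  have hc : (derivative f).coeff (f.natDegree - 1) = f.natDegree * f.leadingCoeff := by
    rw [coeff_derivative]
    have : f.natDegree - 1 + 1 = f.natDegree := by omega
    rw [this]
    rw [leadingCoeff]
    rw [Nat.cast_sub (by omega : 1 ≤ f.natDegree)]
    push_cast
    ring
  have hlc : f.leadingCoeff ≠ 0 := leadingCoeff_ne_zero.2 hf
  have hcne : (derivative f).coeff (f.natDegree - 1) ≠ 0 := by
    rw [hc]
    have : (f.natDegree : ℝ) ≠ 0 := Nat.cast_ne_zero.2 (by omega)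
    exact mul_ne_zero this hlc
  have hge : f.natDegree - 1 ≤ (derivative f).natDegree := le_natDegree_of_ne_zero hcne
  have hlt : (derivative f).natDegree < f.natDegree := natDegree_derivative_lt (by omega)
  have hdeg : (derivative f).natDegree = f.natDegree - 1 := by omega
  refine ⟨hdeg, ?_, fun h => by simp [h] at hcne⟩
  rw [leadingCoeff, hdeg, hc]

theorem rolle_between {f : Polynomial ℝ} :
    ∀ {l : List ℝ}, l.Pairwise (· < ·) → l ≠ [] → (∀ x ∈ l, f.eval x = 0) →
      ∃ mid, Il l mid ∧ ∀ x ∈ mid, (derivative f).eval x = 0 := by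
  intro l
  induction l with
  | nil => intro _ h; exact absurd rfl h
  | cons a t ih =>
    intro hs _ hr
    cases t with
    | nil => exact ⟨[], Il.single a, by simp⟩
    | cons b t' =>
      have hab : a < b := (List.pairwise_cons.1 hs).1 b (by simp)
      have hcont : ContinuousOn (fun x => f.eval x) (Set.Icc a b) :=
        (Polynomial.continuous f).continuousOn
      have heq : f.eval a = f.eval b := by
        rw [hr a (by simp), hr b (by simp)]
      obtain ⟨c, hc, hc0⟩ := exists_deriv_eq_zero hab hcont heq
      have hc0' : (derivative f).eval c = 0 := by
        rw [← Polynomial.deriv]; exact hc0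
      obtain ⟨mid, hmid, hroots⟩ := ih (List.pairwise_cons.1 hs).2 (by simp)
        (fun x hx => hr x (by simp [hx]))
      refine ⟨c :: mid, Il.cons hc.1 hc.2 hmid, ?_⟩
      intro x hx
      rcases List.mem_cons.1 hx with rfl | hx
      · exact hc0'
      · exact hroots x hx

theorem pair_f_deriv {f : Polynomial ℝ} {m : ℕ} (hm : f.natDegree = m) (hm0 : 0 < m)
    (hlc : 0 < f.leadingCoeff) (hroots : Multiset.card f.roots = m) (hnodup : f.roots.Nodup) :
    Pair f (derivative f) := by
  have hf : f ≠ 0 := fun h => by rw [h] at hm; simp at hm; omega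
  set L := f.roots.sort (· ≤ ·) with hL
  have hLco : (L : Multiset ℝ) = f.roots := Multiset.sort_eq _ _
  have hLnd : L.Nodup := by rw [← Multiset.coe_nodup, hLco]; exact hnodup
  have hLs : L.Pairwise (· < ·) := ((Multiset.pairwise_sort (s := f.roots) (r := (· ≤ ·))).and hLnd).imp (fun h => lt_of_le_of_ne h.1 h.2)
  have hLlen : L.length = m := by
    have := congrArg Multiset.card hLco
    simpa [hroots] using this
  have hLroots : ∀ x ∈ L, f.eval x = 0 := by
    intro x hx
    have : x ∈ f.roots := by rw [← hLco]; exact_mod_cast hx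
    exact (mem_roots'.1 this).2
  have hRRf : RR f L := RR_mk hf hLs hLroots (by omega)
  have hLne : L ≠ [] := by
    intro h; rw [h] at hLlen; simp at hLlen; omega
  obtain ⟨mid, hmid, hmroots⟩ := rolle_between hLs hLne hLroots
  obtain ⟨hd1, hd2, hd3⟩ := derivative_facts (f := f) (by omega)
  have hmlen := hmid.length
  have hRRd : RR (derivative f) mid := RR_mk hd3 hmid.sorted_small hmroots (by omega)
  have hlcd : 0 < (derivative f).leadingCoeff := by
    rw [hd2, hm]
    have : (0:ℝ) < m := by exact_mod_cast hm0
    positivity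
  exact ⟨L, mid, hRRf, hRRd, hmid, hlc, hlcd⟩


theorem sturm_two (f : Polynomial ℝ) (n : ℕ) :
    sturmSeq f (n + 2) = -(sturmSeq f n % sturmSeq f (n + 1)) := rfl

theorem Pair.left_ne {p q : Polynomial ℝ} (h : Pair p q) : p ≠ 0 := by
  obtain ⟨L, l, hp, _, _, _, _⟩ := h; exact hp.2.1

theorem Pair.right_ne {p q : Polynomial ℝ} (h : Pair p q) : q ≠ 0 := by
  obtain ⟨L, l, _, hq, _, _, _⟩ := h; exact hq.2.1

theorem Pair.lc_left {p q : Polynomial ℝ} (h : Pair p q) : 0 < p.leadingCoeff := by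
  obtain ⟨L, l, _, _, _, h1, _⟩ := h; exact h1

theorem Pair.lc_right {p q : Polynomial ℝ} (h : Pair p q) : 0 < q.leadingCoeff := by
  obtain ⟨L, l, _, _, _, _, h2⟩ := h; exact h2

theorem A_dir {f : Polynomial ℝ} {m : ℕ} (hm : f.natDegree = m) (hm0 : 0 < m)
    (hlc : 0 < f.leadingCoeff) (hroots : Multiset.card f.roots = m) (hnodup : f.roots.Nodup) :
    ChainCond f m := by
  have hpairs : ∀ i, i ≤ m - 1 →
      Pair (sturmSeq f i) (sturmSeq f (i + 1)) ∧ (sturmSeq f i).natDegree = m - i := by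
    intro i
    induction i with
    | zero =>
      intro _
      exact ⟨pair_f_deriv hm hm0 hlc hroots hnodup, by simpa [sturmSeq] using hm⟩
    | succ j ih =>
      intro hj
      obtain ⟨hpj, hdj⟩ := ih (by omega)
      have hdq : (sturmSeq f (j + 1)).natDegree = m - (j + 1) := by
        have := hpj.deg; omega
      have hne : (sturmSeq f (j + 1)).natDegree ≠ 0 := by omega
      have hstep := stepA hpj hne
      rw [← sturm_two] at hstep
      exact ⟨hstep, hdq⟩
  intro i hi
  by_cases hile : i ≤ m - 1
  · obtain ⟨hp, hd⟩ := hpairs i hile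
    refine ⟨hp.left_ne, hd, ?_⟩
    exact mul_pos hp.lc_left hlc
  · have him : i = m := by omega
    obtain ⟨hp, hd⟩ := hpairs (m - 1) (le_refl _)
    have hmm : m - 1 + 1 = m := by omega
    rw [hmm] at hp
    have hdq : (sturmSeq f m).natDegree = 0 := by
      have := hp.deg; omega
    subst him
    refine ⟨hp.right_ne, by omega, mul_pos hp.lc_right hlc⟩

theorem B_dir {f : Polynomial ℝ} {m : ℕ} (hm : f.natDegree = m) (hm0 : 0 < m)
    (hlc : 0 < f.leadingCoeff) (hcc : ChainCond f m) : Multiset.card f.roots = m := by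
  have hlci : ∀ i ≤ m, 0 < (sturmSeq f i).leadingCoeff := by
    intro i hi
    have h := (hcc i hi).2.2
    nlinarith
  -- base pair
  have hbase : Pair (sturmSeq f (m - 1)) (sturmSeq f m) := by
    obtain ⟨hq0, hqd, _⟩ := hcc m (le_refl _)
    obtain ⟨hp0, hpd, _⟩ := hcc (m - 1) (by omega)
    have hqd' : (sturmSeq f m).natDegree = 0 := by omega
    have hpd' : (sturmSeq f (m - 1)).natDegree = 1 := by omega
    set q := sturmSeq f m with hqdef
    set p := sturmSeq f (m - 1) with hpdef
    have hRRq : RR q [] := by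
      refine ⟨by simp, hq0, by simpa using hqd'.symm, ?_⟩
      simp only [List.map_nil, List.prod_nil, mul_one]
      conv_lhs => rw [eq_C_of_natDegree_eq_zero hqd']
      rw [leadingCoeff, hqd']
    have ha : p.coeff 1 ≠ 0 := by
      have : p.leadingCoeff = p.coeff 1 := by rw [leadingCoeff, hpd']
      have hlcp := hlci (m - 1) (by omega)
      rw [← hpdef] at hlcp
      rw [this] at hlcp
      linarith
    set ρ : ℝ := -(p.coeff 0) / (p.coeff 1) with hρ
    have heval : p.eval ρ = 0 := by
      conv_lhs => rw [eq_X_add_C_of_natDegree_le_one (show p.natDegree ≤ 1 by omega)]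
      simp only [eval_add, eval_mul, eval_C, eval_X]
      rw [hρ, ← mul_div_assoc, mul_div_cancel_left₀ _ ha]
      ring
    have hRRp : RR p [ρ] := RR_mk hp0 (by simp) (by simpa using heval) (by simp [hpd'])
    exact ⟨[ρ], [], hRRp, hRRq, Il.single ρ, hlci (m - 1) (by omega), hlci m (le_refl _)⟩
  have hdown : ∀ j, j ≤ m - 1 → Pair (sturmSeq f (m - 1 - j)) (sturmSeq f (m - j)) := by
    intro j
    induction j with
    | zero => intro _; simpa using hbase
    | succ j ih =>
      intro hj
      have hprev := ih (by omega)
      set k := m - 1 - (j + 1) with hk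
      have hk1 : m - 1 - j = k + 1 := by omega
      have hk2 : m - j = k + 2 := by omega
      rw [hk1, hk2] at hprev
      have hmod : sturmSeq f k % sturmSeq f (k + 1) = -(sturmSeq f (k + 2)) := by
        rw [sturm_two]; ring
      have hdegk : (sturmSeq f k).natDegree = (sturmSeq f (k + 1)).natDegree + 1 := by
        have h1 := (hcc k (by omega)).2.1
        have h2 := (hcc (k + 1) (by omega)).2.1
        omega
      have hq1 : 0 < (sturmSeq f (k + 1)).natDegree := by
        have h2 := (hcc (k + 1) (by omega)).2.1
        omega
      have := stepB hprev hmod hdegk (hlci k (by omega)) hq1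
      have hmj : m - (j + 1) = k + 1 := by omega
      rw [hmj]
      exact this
  have hfinal := hdown (m - 1) (le_refl _)
  have h0 : m - 1 - (m - 1) = 0 := by omega
  have h1 : m - (m - 1) = 1 := by omega
  rw [h0, h1] at hfinal
  obtain ⟨L, l, hRRf, _, _, _, _⟩ := hfinal
  have := hRRf.card_roots
  simp only [sturmSeq] at this
  omega

theorem adjPairs (n : ℕ) : ∀ (g : ℕ → ℝ),
    (((List.range (n + 1)).map g).zip ((List.range (n + 1)).map g).tail)
      = (List.range n).map (fun i => (g i, g (i + 1))) := by
  induction n with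
  | zero => intro g; simp [List.range_succ]
  | succ n ih =>
    intro g
    have h1 : (List.range (n + 2)).map g = g 0 :: (List.range (n + 1)).map (fun i => g (i + 1)) := by
      rw [List.range_succ_eq_map]
      simp [List.map_map, Function.comp_def]
    have h2 : (List.range (n + 1)).map (fun i => g (i + 1))
        = g 1 :: (List.range n).map (fun i => g (i + 2)) := by
      rw [List.range_succ_eq_map]
      simp [List.map_map, Function.comp_def]
    have ih' := ih (fun i => g (i + 1))
    rw [h2] at ih'
    simp only [List.tail_cons] at ih'
    have h3 : (List.range (n + 1)).map (fun i => (g i, g (i + 1)))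
        = (g 0, g 1) :: (List.range n).map (fun i => (g (i + 1), g (i + 2))) := by
      rw [List.range_succ_eq_map]
      simp [List.map_map, Function.comp_def]
    rw [h1, h2, h3, List.tail_cons, List.zip_cons_cons, ih']

theorem signChanges_le (l : List ℝ) :
    signChanges l ≤ (l.filter fun x : ℝ => decide (x ≠ 0)).length - 1 := by
  unfold signChanges
  set l' := l.filter fun x : ℝ => decide (x ≠ 0)
  calc ((l'.zip l'.tail).filter fun q => decide (q.1 * q.2 < 0)).length
      ≤ (l'.zip l'.tail).length := List.length_filter_le _ _
    _ = min l'.length l'.tail.length := List.length_zip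
    _ ≤ l'.length - 1 := by rw [List.length_tail]; omega

theorem signChanges_map (n : ℕ) (g : ℕ → ℝ) (hnz : ∀ i ≤ n, g i ≠ 0) :
    signChanges ((List.range (n + 1)).map g)
      = ((List.range n).filter fun i => decide (g i * g (i + 1) < 0)).length := by
  unfold signChanges
  have hfe : ((List.range (n + 1)).map g).filter (fun x : ℝ => decide (x ≠ 0))
      = (List.range (n + 1)).map g := by
    apply List.filter_eq_self.2
    intro x hx
    obtain ⟨i, hi, rfl⟩ := List.mem_map.1 hx
    simpa using hnz i (by have := List.mem_range.1 hi; omega)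
  simp only [hfe]
  rw [adjPairs n g, List.filter_map, List.length_map]
  rfl

theorem all_of_filter_len {α : Type*} {l : List α} {P : α → Bool}
    (h : (l.filter P).length = l.length) : ∀ x ∈ l, P x :=
  fun x hx => List.filter_eq_self.1 ((List.filter_sublist (l := l)).eq_of_length h) x hx

/-- F1 -/
theorem var_of_chain {f : Polynomial ℝ} {m : ℕ} (hm : f.natDegree = m) (hm0 : 0 < m)
    (hcc : ChainCond f m) : sturmVarTop f = 0 ∧ sturmVarBot f = m := by
  have hf := (hcc 0 (by omega)).1
  have hlcf : f.leadingCoeff ≠ 0 := leadingCoeff_ne_zero.2 hf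
  have hlcsq : 0 < f.leadingCoeff * f.leadingCoeff := mul_self_pos.2 hlcf
  have hcpos : ∀ i < m, 0 < (sturmSeq f i).leadingCoeff * (sturmSeq f (i + 1)).leadingCoeff := by
    intro i hi
    have h1 := (hcc i (by omega)).2.2
    have h2 := (hcc (i + 1) (by omega)).2.2
    nlinarith [mul_pos h1 h2]
  constructor
  · rw [sturmVarTop, hm, signChanges_map m _
      (fun i hi => leadingCoeff_ne_zero.2 (hcc i hi).1)]
    have : (List.range m).filter
        (fun i => decide ((sturmSeq f i).leadingCoeff * (sturmSeq f (i + 1)).leadingCoeff < 0))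
        = [] := by
      apply List.filter_eq_nil_iff.2
      intro i hi
      have := hcpos i (List.mem_range.1 hi)
      simp only [decide_eq_true_eq]
      push_neg
      linarith
    rw [this]; rfl
  · have hnz : ∀ i ≤ m, (-1 : ℝ) ^ (sturmSeq f i).natDegree * (sturmSeq f i).leadingCoeff ≠ 0 := by
      intro i hi
      have := leadingCoeff_ne_zero.2 (hcc i hi).1
      positivity
    rw [sturmVarBot, hm, signChanges_map m _ hnz]
    have : (List.range m).filter (fun i =>
        decide (((-1 : ℝ) ^ (sturmSeq f i).natDegree * (sturmSeq f i).leadingCoeff) *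
          ((-1 : ℝ) ^ (sturmSeq f (i + 1)).natDegree * (sturmSeq f (i + 1)).leadingCoeff) < 0))
        = List.range m := by
      apply List.filter_eq_self.2
      intro i hi
      have hi' := List.mem_range.1 hi
      have hd1 : (sturmSeq f i).natDegree = m - i := (hcc i (by omega)).2.1
      have hd2 : (sturmSeq f (i + 1)).natDegree = m - (i + 1) := (hcc (i + 1) (by omega)).2.1
      have hpow : (-1 : ℝ) ^ (m - i) * (-1 : ℝ) ^ (m - (i + 1)) = -1 := by
        have h1 : m - i = (m - (i + 1)) + 1 := by omega
        rw [h1, pow_succ]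
        have hA : ((-1:ℝ) ^ (m - (i+1))) * ((-1:ℝ) ^ (m - (i+1))) = 1 := by
          rw [← pow_add]; exact Even.neg_one_pow ⟨m - (i+1), by ring⟩
        nlinarith [hA]
      simp only [decide_eq_true_eq]
      rw [hd1, hd2]
      have := hcpos i hi'
      nlinarith [hpow, this]
    rw [this]
    simp

/-- F2 -/
theorem chain_of_var {f : Polynomial ℝ} {m : ℕ} (hm : f.natDegree = m) (hm0 : 0 < m)
    (hf : f ≠ 0)
    (hvar : (sturmVarBot f : ℤ) - (sturmVarTop f : ℤ) = m) : ChainCond f m := by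
  set b : ℕ → ℝ := fun i => (-1 : ℝ) ^ (sturmSeq f i).natDegree * (sturmSeq f i).leadingCoeff
    with hb
  set c : ℕ → ℝ := fun i => (sturmSeq f i).leadingCoeff with hc
  set lb : List ℝ := (List.range (m + 1)).map b with hlb
  have hbotl : sturmVarBot f = signChanges lb := by rw [sturmVarBot, hm]
  have hlblen : lb.length = m + 1 := by simp [hlb]
  have hble : sturmVarBot f ≤ (lb.filter fun x : ℝ => decide (x ≠ 0)).length - 1 := by
    rw [hbotl]; exact signChanges_le lb
  have hfle : (lb.filter fun x : ℝ => decide (x ≠ 0)).length ≤ m + 1 := by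
    calc (lb.filter fun x : ℝ => decide (x ≠ 0)).length ≤ lb.length := List.length_filter_le _ _
      _ = m + 1 := hlblen
  have hbotle : sturmVarBot f ≤ m := by omega
  have hbot : sturmVarBot f = m ∧ sturmVarTop f = 0 := by
    constructor <;> omega
  -- all entries nonzero
  have hflen : (lb.filter fun x : ℝ => decide (x ≠ 0)).length = lb.length := by
    rw [hlblen]; omega
  have hnzb : ∀ i ≤ m, b i ≠ 0 := by
    intro i hi
    have := all_of_filter_len hflen (b i)
      (by rw [hlb]; exact List.mem_map.2 ⟨i, List.mem_range.2 (by omega), rfl⟩)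
    simpa using this
  have hne : ∀ i ≤ m, sturmSeq f i ≠ 0 := by
    intro i hi
    have := hnzb i hi
    rw [hb] at this
    intro h0
    apply this
    simp [h0]
  have hnzc : ∀ i ≤ m, c i ≠ 0 := fun i hi => leadingCoeff_ne_zero.2 (hne i hi)
  -- top variations zero: adjacent lc products positive
  have htop0 := hbot.2
  rw [sturmVarTop, hm, signChanges_map m c (fun i hi => hnzc i hi)] at htop0
  have htopnil : ∀ i < m, 0 < c i * c (i + 1) := by
    intro i hi
    have hnil := List.length_eq_zero_iff.1 htop0
    have := List.filter_eq_nil_iff.1 hnil i (List.mem_range.2 hi)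
    simp only [decide_eq_true_eq] at this
    push_neg at this
    rcases this.lt_or_eq with h | h
    · exact h
    · exact absurd h.symm (mul_ne_zero (hnzc i (by omega)) (hnzc (i + 1) (by omega)))
  -- degrees
  have hdrop : ∀ i, i + 1 ≤ m →
      (sturmSeq f (i + 1)).natDegree + 1 ≤ (sturmSeq f i).natDegree := by
    intro i hi
    cases i with
    | zero =>
      obtain ⟨hd1, _, _⟩ := derivative_facts (f := f) (by omega)
      have : (sturmSeq f 1) = derivative f := rfl
      rw [this, hd1]
      simp only [sturmSeq, hm]
      omega
    | succ j =>
      have hlt : (sturmSeq f (j + 2)).natDegree < (sturmSeq f (j + 1)).natDegree := by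
        apply natDegree_lt_natDegree (hne (j + 2) (by omega))
        rw [sturm_two, degree_neg]
        exact degree_mod_lt' (hne (j + 1) (by omega))
      have hnorm : (sturmSeq f (j + 1 + 1)).natDegree = (sturmSeq f (j + 2)).natDegree := rfl
      omega
  have hupper : ∀ i, 1 ≤ i → i ≤ m → (sturmSeq f i).natDegree + i ≤ m := by
    intro i
    induction i with
    | zero => omega
    | succ j ih =>
      intro _ hj
      cases Nat.eq_zero_or_pos j with
      | inl h0 =>
        subst h0
        have := hdrop 0 (by omega)
        simp only [sturmSeq, hm] at this ⊢
        omega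
      | inr hpos =>
        have h1 := ih hpos (by omega)
        have h2 := hdrop j (by omega)
        omega
  have hlower : ∀ k, k ≤ m → k ≤ (sturmSeq f (m - k)).natDegree := by
    intro k
    induction k with
    | zero => omega
    | succ j ih =>
      intro hj
      have h1 := ih (by omega)
      have heq : m - j = (m - (j + 1)) + 1 := by omega
      rw [heq] at h1
      have h2 := hdrop (m - (j + 1)) (by omega)
      omega
  have hdeg : ∀ i ≤ m, (sturmSeq f i).natDegree = m - i := by
    intro i hi
    cases Nat.eq_zero_or_pos i with
    | inl h0 => subst h0; simpa [sturmSeq] using hm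
    | inr hpos =>
      have h1 := hupper i hpos hi
      have h2 := hlower (m - i) (by omega)
      have heq : m - (m - i) = i := by omega
      rw [heq] at h2
      omega
  -- signs
  have hsign : ∀ i ≤ m, 0 < c i * c 0 := by
    intro i
    induction i with
    | zero => intro _; exact mul_self_pos.2 (hnzc 0 (by omega))
    | succ j ih =>
      intro hj
      have h1 := ih (by omega)
      have h2 := htopnil j (by omega)
      nlinarith [mul_pos h1 h2, mul_self_pos.2 (hnzc j (by omega))]
  intro i hi
  refine ⟨hne i hi, hdeg i hi, ?_⟩
  have := hsign i hi
  have hc0 : c 0 = f.leadingCoeff := rfl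
  rw [hc0] at this
  exact this

theorem neg_mod_neg (a b : Polynomial ℝ) : (-a) % (-b) = -(a % b) := by
  rw [Polynomial.mod_def, Polynomial.mod_def, leadingCoeff_neg]
  have h1 : -b * C (-b.leadingCoeff)⁻¹ = b * C b.leadingCoeff⁻¹ := by
    rw [inv_neg, map_neg]; ring
  rw [h1, Polynomial.neg_modByMonic]

theorem sturmSeq_neg (f : Polynomial ℝ) : ∀ i, sturmSeq (-f) i = -sturmSeq f i := by
  intro i
  induction i using Nat.strong_induction_on with
  | _ i ih =>
    match i with
    | 0 => rfl
    | 1 => show derivative (-f) = -derivative f; simp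
    | (n + 2) => rw [sturm_two, sturm_two, ih n (by omega), ih (n + 1) (by omega),
        neg_mod_neg, neg_neg]

theorem chainCond_neg (f : Polynomial ℝ) (m : ℕ) : ChainCond (-f) m ↔ ChainCond f m := by
  unfold ChainCond
  simp only [sturmSeq_neg, natDegree_neg, leadingCoeff_neg, neg_ne_zero, neg_mul_neg]

theorem core_pos {f : Polynomial ℝ} {m : ℕ} (hm : f.natDegree = m) (hm0 : 0 < m)
    (hlc : 0 < f.leadingCoeff) (hnodup : f.roots.Nodup) :
    Multiset.card f.roots = m ↔ ChainCond f m :=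
  ⟨fun h => A_dir hm hm0 hlc h hnodup, fun h => B_dir hm hm0 hlc h⟩

theorem core_any {f : Polynomial ℝ} {m : ℕ} (hm : f.natDegree = m) (hm0 : 0 < m)
    (hnodup : f.roots.Nodup) :
    Multiset.card f.roots = m ↔ ChainCond f m := by
  have hf : f ≠ 0 := fun h => by rw [h] at hm; simp at hm; omega
  rcases (leadingCoeff_ne_zero.2 hf).lt_or_gt with hneg | hpos
  · have h1 : (-f).natDegree = m := by rwa [natDegree_neg]
    have h2 : 0 < (-f).leadingCoeff := by rw [leadingCoeff_neg]; linarith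
    have h3 : (-f).roots = f.roots := by
      rw [← neg_one_smul ℝ f, roots_smul_nonzero _ (by norm_num : (-1 : ℝ) ≠ 0)]
    have hiff := core_pos h1 hm0 h2 (by rw [h3]; exact hnodup)
    rw [h3] at hiff
    exact hiff.trans (chainCond_neg f m)
  · exact core_pos hm hm0 hpos hnodup

/-- a squarefree real polynomial of degree `m` has all roots real iff
`V(-∞) - V(∞) = m`. -/
theorem realRooted_iff_sturmVar (f : Polynomial ℝ) (m : ℕ) (hm : f.natDegree = m)
    (hm0 : 0 < m) (hsf : IsCoprime f (derivative f)) :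
    f.roots.card = m ↔ (sturmVarBot f : ℤ) - (sturmVarTop f : ℤ) = m := by
  have hnodup : f.roots.Nodup := nodup_roots hsf
  have hf : f ≠ 0 := fun h => by rw [h] at hm; simp at hm; omega
  constructor
  · intro h
    obtain ⟨ht, hb⟩ := var_of_chain hm hm0 ((core_any hm hm0 hnodup).1 h)
    rw [ht, hb]
    simp
  · intro h
    exact (core_any hm hm0 hnodup).2 (chain_of_var hm hm0 hf h)
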